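/- If a function of n regional-change choices is a finite sum of functions each of which is independent of at least one of the choices, then its alternating sum vanishes: for every additive commutative group A, every finite index type ι, and every family g : ι → ((Fin n → Bool) → A) such that for each j : ι there exists a position i with g j w = g j (flip_i w) for all words w (flip_i negating the i-th letter), the function f = Σ_j g j satisfies Σ_{w : Fin n → Bool} (-1)^w f(w) = 0. (This is the combinatorial mechanism behind the observation that if within each of r+1 fixed slices one makes a regional change of any nature to a knot, the order r Kontsevich integral vanishes on the alternating sum of the knots so obtained.) -/

import Mathlib

/-! After exchanging the two sums it suffices to treat a single summand `g j`, invariant under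
flipping some letter `i`. Flipping `i` is a fixed-point-free involution on words that reverses the
sign `(-1)^w`, so the terms of `w` and of its flip cancel in pairs. -/

/-- The sign `(-1)^w` of a word `w : Fin n → Bool`: `(-1)^m` where `m` is the
number of `true` (i.e. `b`) letters of `w`. -/
def wordSign {n : ℕ} (w : Fin n → Bool) : ℤ :=
  (-1) ^ (Finset.univ.filter fun i => w i = true).card

/-- Negate the `i`-th letter of a word. -/
def flipLetter {n : ℕ} (i : Fin n) (w : Fin n → Bool) : Fin n → Bool :=
  Function.update w i (! w i)

lemma wordSign_eq_prod {n : ℕ} (w : Fin n → Bool) :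
    wordSign w = ∏ k, if w k then -1 else 1 := by
  rw [Finset.prod_ite, Finset.prod_const, Finset.prod_const_one, mul_one, wordSign]

lemma wordSign_flipLetter {n : ℕ} (i : Fin n) (w : Fin n → Bool) :
    wordSign (flipLetter i w) = -wordSign w := by
  have hfactor : ∀ k, (if flipLetter i w k then -1 else 1 : ℤ) =
      (if k = i then -1 else 1) * if w k then -1 else 1 := by
    intro k
    by_cases hk : k = i
    · subst hk; cases hw : w k <;> simp [flipLetter, hw]
    · simp [flipLetter, hk]
  simp only [wordSign_eq_prod, hfactor, Finset.prod_mul_distrib, Finset.prod_ite_eq',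
    Finset.mem_univ, if_true, neg_one_mul]

lemma flipLetter_involutive {n : ℕ} (i : Fin n) : Function.Involutive (flipLetter i) := by
  intro w
  simp [flipLetter]

lemma flipLetter_ne {n : ℕ} (i : Fin n) (w : Fin n → Bool) : flipLetter i w ≠ w :=
  fun h => by simpa [flipLetter] using congrFun h i

lemma sum_wordSign_smul_eq_zero_of_flipLetter_invariant {A : Type*} [AddCommGroup A] {n : ℕ}
    (i : Fin n) (f : (Fin n → Bool) → A) (hf : ∀ w, f (flipLetter i w) = f w) :
    ∑ w, wordSign w • f w = 0 :=
  Finset.sum_ninvolution (flipLetter i)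
    (fun w => by rw [wordSign_flipLetter, hf, neg_smul, add_neg_cancel])
    (fun w _ => flipLetter_ne i w) (fun _ => Finset.mem_univ _) (flipLetter_involutive i)

/-- If a function of `n` regional-change choices is a finite sum of functions,
each of which is independent of at least one of the choices, then its
alternating sum vanishes.  This is the combinatorial mechanism behind the
vanishing of the order-`r` Kontsevich integral on the alternating sum obtained
by making a regional change within each of `r+1` fixed slices. -/
theorem alternating_sum_eq_zero_of_sum_indep {A : Type*} [AddCommGroup A]
    {n : ℕ} {ι : Type*} [Fintype ι] (g : ι → ((Fin n → Bool) → A))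
    (hg : ∀ j : ι, ∃ i : Fin n, ∀ w : Fin n → Bool, g j w = g j (flipLetter i w)) :
    ∑ w : Fin n → Bool, wordSign w • (∑ j : ι, g j w) = 0 := by
  simp only [Finset.smul_sum]
  rw [Finset.sum_comm]
  refine Finset.sum_eq_zero fun j _ => ?_
  obtain ⟨i, hi⟩ := hg j
  exact sum_wordSign_smul_eq_zero_of_flipLetter_invariant i (g j) fun w => (hi w).symm
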